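/- arXiv:1607.01814 — 6 statements merged into one kernel-verified Lean document; each statement's English description precedes it below -/
import Mathlib

section
/- Let g : ℕ → ℂ be multiplicative with g(p) = 0 for every prime p and |g(p^k)| ≤ 2 for every prime p and every integer k ≥ 2. Then for every real σ with 1/2 < σ < 1, the series Σ_{n=1}^{∞} |g(n)| n^{−σ} converges and satisfies Σ_{n=1}^{∞} |g(n)| n^{−σ} ≤ ζ(2σ)² ζ(3σ)², where ζ is the Riemann zeta function. -/
/-- The Riemann zeta function for real `s > 1`: `ζ(s) = ∑_{n=1}^∞ n^{-s}`. -/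
noncomputable def zetaReal (s : ℝ) : ℝ := ∑' n : ℕ, ((n : ℝ) + 1) ^ (-s)

/-!
A multiplicative `g` vanishing at the primes is supported on powerful numbers `n`, where
`|g(n)| ≤ 2^ω(n)`. Writing each exponent `e ≥ 2` of `n` as `2a + 3c` and distributing the primes of
`n` between two factors gives `2^ω(n)` distinct representations `n = a²c³ · b²d³`, so the series is
dominated termwise by `∑_{a,b,c,d} (a²c³b²d³)^{-σ} = ζ(2σ)² ζ(3σ)²`. The comparison is made in
`ℝ≥0∞`, where rearranging the nonnegative series needs no summability argument.
-/

open Finset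
open scoped ENNReal

def Nat.IsPowerful (n : ℕ) : Prop := ∀ p ∈ n.primeFactors, 2 ≤ n.factorization p

namespace Nat

variable {n : ℕ} {S : Finset ℕ}

lemma prime_dvd_prod_pow_factorization_iff (hS : S ⊆ n.primeFactors) {p : ℕ} (hp : p.Prime) :
    p ∣ ∏ q ∈ S, q ^ n.factorization q ↔ p ∈ S := by
  rw [hp.prime.dvd_finsetProd_iff]
  constructor
  · rintro ⟨q, hq, hpq⟩
    rwa [(prime_dvd_prime_iff_eq hp (prime_of_mem_primeFactors (hS hq))).1
      (hp.dvd_of_dvd_pow hpq)]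
  · intro hpS
    exact ⟨p, hpS, dvd_pow_self p (Finsupp.mem_support_iff.1 (support_factorization n ▸ hS hpS))⟩

lemma prod_pow_factorization_injOn (n : ℕ) :
    Set.InjOn (fun S : Finset ℕ => ∏ p ∈ S, p ^ n.factorization p) n.primeFactors.powerset := by
  intro S hS T hT hST
  rw [coe_powerset, Set.mem_preimage, Set.mem_powerset_iff, coe_subset] at hS hT
  ext p
  by_cases hp : p ∈ n.primeFactors
  · have hp := prime_of_mem_primeFactors hp
    rw [← prime_dvd_prod_pow_factorization_iff hS hp, ← prime_dvd_prod_pow_factorization_iff hT hp]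
    exact Eq.to_iff (congrArg (p ∣ ·) hST)
  · exact iff_of_false (fun h => hp (hS h)) (fun h => hp (hT h))

lemma prod_pow_factorization_mul_prod_sdiff (hn : n ≠ 0) (hS : S ⊆ n.primeFactors) :
    (∏ p ∈ S, p ^ n.factorization p) * ∏ p ∈ n.primeFactors \ S, p ^ n.factorization p = n := by
  rw [mul_comm, prod_sdiff hS, ← prod_factorization_eq_prod_primeFactors,
    prod_factorization_pow_eq_self hn]

end Nat

def sqCube (t : ℕ × ℕ) : ℕ := t.1 ^ 2 * t.2 ^ 3

def sqCubePair (t : (ℕ × ℕ) × (ℕ × ℕ)) : ℕ := sqCube t.1 * sqCube t.2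

/-- An exponent `e ≥ 2` is `2 (e / 2 - e % 2) + 3 (e % 2)`, so the part of a powerful `n` supported
on `S` is `sqCube (sqPart n S, cubePart n S)`. -/
def sqPart (n : ℕ) (S : Finset ℕ) : ℕ :=
  ∏ p ∈ S, p ^ (n.factorization p / 2 - n.factorization p % 2)

def cubePart (n : ℕ) (S : Finset ℕ) : ℕ := ∏ p ∈ S, p ^ (n.factorization p % 2)

def sqCubeSplit (n : ℕ) (S : Finset ℕ) : (ℕ × ℕ) × (ℕ × ℕ) :=
  ((sqPart n S, cubePart n S), (sqPart n (n.primeFactors \ S), cubePart n (n.primeFactors \ S)))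

section sqCubeSplit

variable {n : ℕ} {S : Finset ℕ}

lemma sqCube_sqPart_cubePart (hn : n.IsPowerful) (hS : S ⊆ n.primeFactors) :
    sqCube (sqPart n S, cubePart n S) = ∏ p ∈ S, p ^ n.factorization p := by
  rw [sqCube, sqPart, cubePart, ← prod_pow, ← prod_pow, ← prod_mul_distrib]
  refine prod_congr rfl fun p hp => ?_
  have := hn p (hS hp)
  rw [← pow_mul, ← pow_mul, ← pow_add]
  congr 1
  omega

lemma sqCubePair_sqCubeSplit (hn0 : n ≠ 0) (hn : n.IsPowerful) (hS : S ⊆ n.primeFactors) :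
    sqCubePair (sqCubeSplit n S) = n := by
  rw [sqCubePair, sqCubeSplit, sqCube_sqPart_cubePart hn hS,
    sqCube_sqPart_cubePart hn sdiff_subset, Nat.prod_pow_factorization_mul_prod_sdiff hn0 hS]

lemma sqCubeSplit_injOn (hn : n.IsPowerful) : Set.InjOn (sqCubeSplit n) n.primeFactors.powerset := by
  intro S hS T hT hST
  refine Nat.prod_pow_factorization_injOn n hS hT ?_
  have := congrArg (sqCube ·.1) hST
  rwa [sqCubeSplit, sqCubeSplit, sqCube_sqPart_cubePart hn (mem_powerset.1 hS),
    sqCube_sqPart_cubePart hn (mem_powerset.1 hT)] at this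

lemma two_pow_card_primeFactors_mul_le_tsum (hn0 : n ≠ 0) (hn : n.IsPowerful) (c : ℝ≥0∞) :
    2 ^ #n.primeFactors * c ≤ ∑' _ : sqCubePair ⁻¹' {n}, c := by
  let ι (S : n.primeFactors.powerset) : sqCubePair ⁻¹' {n} :=
    ⟨sqCubeSplit n S, sqCubePair_sqCubeSplit hn0 hn (mem_powerset.1 S.2)⟩
  have hι : Function.Injective ι := fun S T h =>
    Subtype.ext (sqCubeSplit_injOn hn S.2 T.2 (congrArg Subtype.val h))
  calc 2 ^ #n.primeFactors * c = ∑' _ : n.primeFactors.powerset, c := by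
        rw [tsum_fintype, sum_const, card_univ, Fintype.card_coe, card_powerset, nsmul_eq_mul,
          Nat.cast_pow, Nat.cast_ofNat]
    _ ≤ ∑' _ : sqCubePair ⁻¹' {n}, c := ENNReal.tsum_comp_le_tsum_of_injective hι fun _ => c

end sqCubeSplit

lemma ofReal_natCast_mul_rpow (x y : ℕ) (s : ℝ) :
    ENNReal.ofReal (((x * y : ℕ) : ℝ) ^ s) =
      ENNReal.ofReal ((x : ℝ) ^ s) * ENNReal.ofReal ((y : ℝ) ^ s) := by
  rw [Nat.cast_mul, Real.mul_rpow (Nat.cast_nonneg x) (Nat.cast_nonneg y),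
    ENNReal.ofReal_mul (by positivity)]

lemma tsum_ofReal_natCast_mul_rpow {α β : Type*} (u : α → ℕ) (v : β → ℕ) (s : ℝ) :
    ∑' t : α × β, ENNReal.ofReal (((u t.1 * v t.2 : ℕ) : ℝ) ^ s) =
      (∑' a, ENNReal.ofReal ((u a : ℝ) ^ s)) * ∑' b, ENNReal.ofReal ((v b : ℝ) ^ s) := by
  simp only [ofReal_natCast_mul_rpow, ENNReal.tsum_prod', ENNReal.tsum_mul_left,
    ENNReal.tsum_mul_right]

lemma zetaReal_nonneg (s : ℝ) : 0 ≤ zetaReal s := tsum_nonneg fun _ => by positivity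

lemma ofReal_zetaReal {s : ℝ} (hs : 1 < s) :
    ENNReal.ofReal (zetaReal s) = ∑' n : ℕ, ENNReal.ofReal ((n : ℝ) ^ (-s)) := by
  have hsum : Summable fun n : ℕ => ((n : ℝ) + 1) ^ (-s) := by
    exact_mod_cast (summable_nat_add_iff 1).2 (Real.summable_nat_rpow.2 (by linarith))
  rw [zetaReal, ENNReal.ofReal_tsum_of_nonneg (fun n => by positivity) hsum,
    tsum_eq_zero_add' (f := fun n : ℕ => ENNReal.ofReal ((n : ℝ) ^ (-s))) ENNReal.summable]
  simp [Real.zero_rpow (by linarith : -s ≠ 0)]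

lemma ofReal_natCast_pow_rpow (a k : ℕ) (s : ℝ) :
    ENNReal.ofReal (((a ^ k : ℕ) : ℝ) ^ (-s)) = ENNReal.ofReal ((a : ℝ) ^ (-(k * s))) := by
  rw [Nat.cast_pow, ← Real.rpow_natCast_mul (Nat.cast_nonneg a), mul_neg]

lemma tsum_ofReal_sqCube_rpow {σ : ℝ} (hσ : 1 / 2 < σ) :
    ∑' t, ENNReal.ofReal ((sqCube t : ℝ) ^ (-σ)) =
      ENNReal.ofReal (zetaReal (2 * σ) * zetaReal (3 * σ)) := by
  rw [ENNReal.ofReal_mul (zetaReal_nonneg _), ofReal_zetaReal (by linarith),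
    ofReal_zetaReal (by linarith)]
  have := tsum_ofReal_natCast_mul_rpow (· ^ 2) (· ^ 3) (-σ)
  simp only [ofReal_natCast_pow_rpow] at this
  exact_mod_cast this

lemma tsum_ofReal_sqCubePair_rpow {σ : ℝ} (hσ : 1 / 2 < σ) :
    ∑' t, ENNReal.ofReal ((sqCubePair t : ℝ) ^ (-σ)) =
      ENNReal.ofReal (zetaReal (2 * σ) ^ 2 * zetaReal (3 * σ) ^ 2) := by
  unfold sqCubePair
  rw [tsum_ofReal_natCast_mul_rpow, tsum_ofReal_sqCube_rpow hσ,
    ← ENNReal.ofReal_mul (by positivity [zetaReal_nonneg (2 * σ), zetaReal_nonneg (3 * σ)])]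
  ring_nf

lemma summable_and_tsum_le_of_tsum_ofReal_le {α : Type*} {f : α → ℝ} {C : ℝ} (hf : ∀ a, 0 ≤ f a)
    (hC : 0 ≤ C) (h : ∑' a, ENNReal.ofReal (f a) ≤ ENNReal.ofReal C) :
    Summable f ∧ ∑' a, f a ≤ C := by
  have hsum : Summable f := by
    simpa [ENNReal.toReal_ofReal (hf _)] using
      ENNReal.summable_toReal (ne_top_of_le_ne_top ENNReal.ofReal_ne_top h)
  refine ⟨hsum, ?_⟩
  rwa [← ENNReal.ofReal_tsum_of_nonneg hf hsum, ENNReal.ofReal_le_ofReal_iff hC] at h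

section Multiplicative

variable {R : Type*} {f : ℕ → R} {n : ℕ}

lemma eq_zero_of_not_isPowerful [CommMonoidWithZero R]
    (hmul : ∀ x y, x.Coprime y → f (x * y) = f x * f y) (hf1 : f 1 = 1)
    (hfp : ∀ p : ℕ, p.Prime → f p = 0) (hn0 : n ≠ 0) (hn : ¬ n.IsPowerful) : f n = 0 := by
  obtain ⟨p, hp, hlt⟩ : ∃ p ∈ n.primeFactors, n.factorization p < 2 := by
    simpa only [Nat.IsPowerful, not_forall, not_le, exists_prop] using hn
  have hp1 : n.factorization p = 1 := by
    have := (Nat.prime_of_mem_primeFactors hp).factorization_pos_of_dvd hn0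
      (Nat.dvd_of_mem_primeFactors hp)
    omega
  rw [Nat.multiplicative_factorization f hmul hf1 hn0, Finsupp.prod]
  refine prod_eq_zero (i := p) (by rwa [Nat.support_factorization]) ?_
  rw [hp1, pow_one, hfp p (Nat.prime_of_mem_primeFactors hp)]

lemma norm_le_pow_card_primeFactors [NormedField R]
    (hmul : ∀ x y, x.Coprime y → f (x * y) = f x * f y) (hf1 : f 1 = 1) {C : ℝ}
    (hfpk : ∀ p k : ℕ, p.Prime → 2 ≤ k → ‖f (p ^ k)‖ ≤ C) (hn0 : n ≠ 0) (hn : n.IsPowerful) :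
    ‖f n‖ ≤ C ^ #n.primeFactors := by
  rw [Nat.multiplicative_factorization (‖f ·‖) (fun x y h => by simp [hmul x y h]) (by simp [hf1])
    hn0, Finsupp.prod, Nat.support_factorization, ← prod_const]
  exact prod_le_prod (fun _ _ => norm_nonneg _) fun p hp =>
    hfpk p _ (Nat.prime_of_mem_primeFactors hp) (hn p hp)

lemma ofReal_norm_mul_rpow_le_tsum_sqCubePair [NormedField R]
    (hmul : ∀ x y, x.Coprime y → f (x * y) = f x * f y) (hf1 : f 1 = 1)
    (hfp : ∀ p : ℕ, p.Prime → f p = 0) (hfpk : ∀ p k : ℕ, p.Prime → 2 ≤ k → ‖f (p ^ k)‖ ≤ 2)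
    {σ : ℝ} (hσ : σ ≠ 0) (n : ℕ) :
    ENNReal.ofReal (‖f n‖ * (n : ℝ) ^ (-σ)) ≤
      ∑' t : sqCubePair ⁻¹' {n}, ENNReal.ofReal ((sqCubePair t : ℝ) ^ (-σ)) := by
  rcases eq_or_ne n 0 with rfl | hn0
  · simp [Real.zero_rpow (neg_ne_zero.2 hσ)]
  by_cases hn : n.IsPowerful
  swap
  · simp [eq_zero_of_not_isPowerful hmul hf1 hfp hn0 hn]
  calc ENNReal.ofReal (‖f n‖ * (n : ℝ) ^ (-σ))
      ≤ 2 ^ #n.primeFactors * ENNReal.ofReal ((n : ℝ) ^ (-σ)) := by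
        rw [ENNReal.ofReal_mul (norm_nonneg _)]
        gcongr
        refine ENNReal.ofReal_le_of_le_toReal ?_
        simpa using norm_le_pow_card_primeFactors hmul hf1 hfpk hn0 hn
    _ ≤ ∑' _ : sqCubePair ⁻¹' {n}, ENNReal.ofReal ((n : ℝ) ^ (-σ)) :=
        two_pow_card_primeFactors_mul_le_tsum hn0 hn _
    _ = _ := tsum_congr fun t => by rw [t.2]

end Multiplicative

/-- If `g` is multiplicative with `g(p) = 0` at every prime and `|g(p^k)| ≤ 2` for every
prime `p` and `k ≥ 2`, then for every `1/2 < σ < 1` the series `∑ |g(n)| n^{-σ}`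
converges and is at most `ζ(2σ)² ζ(3σ)²`. (The `n = 0` term vanishes since
`0^{-σ} = 0` for the real power.) -/
theorem multiplicative_series_zeta_bound (g : ℕ → ℂ)
    (hg1 : g 1 = 1)
    (hgmul : ∀ m n : ℕ, 0 < m → 0 < n → Nat.Coprime m n → g (m * n) = g m * g n)
    (hgp : ∀ p : ℕ, p.Prime → g p = 0)
    (hgpk : ∀ p k : ℕ, p.Prime → 2 ≤ k → ‖g (p ^ k)‖ ≤ 2) :
    ∀ σ : ℝ, 1 / 2 < σ → σ < 1 →
      Summable (fun n : ℕ => ‖g n‖ * (n : ℝ) ^ (-σ)) ∧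
      ∑' n : ℕ, ‖g n‖ * (n : ℝ) ^ (-σ) ≤
        zetaReal (2 * σ) ^ 2 * zetaReal (3 * σ) ^ 2 := by
  intro σ hσ _
  have hmul : ∀ m n : ℕ, m.Coprime n → g (m * n) = g m * g n := by
    intro m n hmn
    rcases m.eq_zero_or_pos with rfl | hm
    · simp [(Nat.coprime_zero_left n).1 hmn, hg1]
    rcases n.eq_zero_or_pos with rfl | hn
    · simp [(Nat.coprime_zero_right m).1 hmn, hg1]
    exact hgmul m n hm hn hmn
  refine summable_and_tsum_le_of_tsum_ofReal_le (fun n => by positivity)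
    (by positivity [zetaReal_nonneg (2 * σ), zetaReal_nonneg (3 * σ)]) ?_
  calc ∑' n : ℕ, ENNReal.ofReal (‖g n‖ * (n : ℝ) ^ (-σ))
      ≤ ∑' n : ℕ, ∑' t : sqCubePair ⁻¹' {n}, ENNReal.ofReal ((sqCubePair t : ℝ) ^ (-σ)) :=
        ENNReal.tsum_le_tsum
          (ofReal_norm_mul_rpow_le_tsum_sqCubePair hmul hg1 hgp hgpk (by linarith))
    _ = ∑' t, ENNReal.ofReal ((sqCubePair t : ℝ) ^ (-σ)) :=
        ENNReal.tsum_fiberwise (fun t => ENNReal.ofReal ((sqCubePair t : ℝ) ^ (-σ))) sqCubePair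
    _ = _ := tsum_ofReal_sqCubePair_rpow hσ
end

section
/- Let Y, Z be reals with 2 ≤ Y < Z, and let n be a positive integer such that p² does not divide n for any prime p with Y ≤ p < Z. Define w(m) = 1/(#{p prime : Y ≤ p < Z, p | m} + 1) for positive integers m. Then Σ_{p prime : Y ≤ p < Z, p | n} w(n/p) equals 1 if n has at least one prime factor p with Y ≤ p < Z, and equals 0 otherwise. -/
/-- Ramaré's weight function `w(m) = 1/(#{Y ≤ p < Z : p | m} + 1)`, where `p` ranges
over primes. -/
noncomputable def ramareWeight (Y Z : ℝ) (m : ℕ) : ℝ :=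
  1 / (((m.primeFactors.filter (fun p : ℕ => Y ≤ (p : ℝ) ∧ (p : ℝ) < Z)).card : ℝ) + 1)

/-!
For each prime `p ∈ [Y, Z)` dividing `n`, the hypothesis `p² ∤ n` means that `n / p` keeps
exactly the other primes of `[Y, Z)` dividing `n`. If there are `k` of them in all, every term
of the sum is `1 / k`, and the `k` terms add up to `1`.
-/

open Finset

theorem Nat.primeFactors_div_eq_erase {n p : ℕ} (hp : p.Prime) (hpn : p ∣ n)
    (hsq : ¬ p ^ 2 ∣ n) : (n / p).primeFactors = n.primeFactors.erase p := by
  have hn : n ≠ 0 := by rintro rfl; exact hsq (dvd_zero _)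
  ext q
  simp only [Nat.mem_primeFactors, mem_erase]
  constructor
  · rintro ⟨hq, hqd, -⟩
    have hqp : q ≠ p := by
      rintro rfl
      exact hsq (pow_two q ▸ (Nat.dvd_div_iff_mul_dvd hpn).mp hqd)
    exact ⟨hqp, hq, hqd.trans (Nat.div_dvd_of_dvd hpn), hn⟩
  · rintro ⟨hqp, hq, hqd, -⟩
    refine ⟨hq, (Nat.dvd_div_iff_mul_dvd hpn).mpr ?_, ?_⟩
    · exact ((Nat.coprime_primes hp hq).mpr hqp.symm).mul_dvd_of_dvd_of_dvd hpn hqd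
    · exact (Nat.div_pos (Nat.le_of_dvd (Nat.pos_of_ne_zero hn) hpn) hp.pos).ne'

theorem Finset.sum_one_div_card_erase_add_one {α K : Type*} [DecidableEq α] [DivisionRing K]
    [CharZero K] (s : Finset α) :
    ∑ a ∈ s, 1 / ((#(s.erase a) : K) + 1) = if s.Nonempty then 1 else 0 := by
  rcases s.eq_empty_or_nonempty with rfl | hs
  · simp
  have hcard : ∀ a ∈ s, 1 / ((#(s.erase a) : K) + 1) = 1 / #s := by
    intro a ha
    rw [← Nat.cast_add_one, card_erase_add_one ha]
  rw [sum_congr rfl hcard, sum_const, nsmul_eq_mul, if_pos hs,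
    mul_one_div_cancel (Nat.cast_ne_zero.mpr hs.card_pos.ne')]

theorem ramareWeight_div_eq {Y Z : ℝ} {n p : ℕ} (hp : p ∈ n.primeFactors) (hsq : ¬ p ^ 2 ∣ n) :
    ramareWeight Y Z (n / p) = 1 /
      ((#((n.primeFactors.filter (fun q : ℕ => Y ≤ (q : ℝ) ∧ (q : ℝ) < Z)).erase p) : ℝ) + 1) := by
  rw [ramareWeight, Nat.primeFactors_div_eq_erase (Nat.prime_of_mem_primeFactors hp)
    (Nat.dvd_of_mem_primeFactors hp) hsq, filter_erase]

theorem ramare_identity_general (Y Z : ℝ) (n : ℕ)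
    (hsf : ∀ p : ℕ, p.Prime → Y ≤ (p : ℝ) → (p : ℝ) < Z → ¬ p ^ 2 ∣ n) :
    ∑ p ∈ n.primeFactors.filter (fun p : ℕ => Y ≤ (p : ℝ) ∧ (p : ℝ) < Z),
        ramareWeight Y Z (n / p) =
      if ∃ p ∈ n.primeFactors, Y ≤ (p : ℝ) ∧ (p : ℝ) < Z then 1 else 0 := by
  set S := n.primeFactors.filter (fun p : ℕ => Y ≤ (p : ℝ) ∧ (p : ℝ) < Z)
  have hweight : ∀ p ∈ S, ramareWeight Y Z (n / p) = 1 / ((#(S.erase p) : ℝ) + 1) := by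
    intro p hp
    obtain ⟨hpn, hYp, hpZ⟩ := mem_filter.mp hp
    exact ramareWeight_div_eq hpn (hsf p (Nat.prime_of_mem_primeFactors hpn) hYp hpZ)
  rw [sum_congr rfl hweight, sum_one_div_card_erase_add_one]
  exact if_congr filter_nonempty_iff rfl rfl

/-- The Ramaré identity: if `n ≥ 1` is not divisible by `p²` for any prime
`p ∈ [Y, Z)`, then `∑_{Y ≤ p < Z, p | n} w(n/p)` equals `1` if `n` has a prime factor
in `[Y, Z)` and `0` otherwise. -/
theorem ramare_identity (Y Z : ℝ) (hY : 2 ≤ Y) (hYZ : Y < Z) (n : ℕ) (hn : 0 < n)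
    (hsf : ∀ p : ℕ, p.Prime → Y ≤ (p : ℝ) → (p : ℝ) < Z → ¬ p ^ 2 ∣ n) :
    ∑ p ∈ n.primeFactors.filter (fun p : ℕ => Y ≤ (p : ℝ) ∧ (p : ℝ) < Z),
        ramareWeight Y Z (n / p) =
      if ∃ p ∈ n.primeFactors, Y ≤ (p : ℝ) ∧ (p : ℝ) < Z then 1 else 0 :=
  ramare_identity_general Y Z n hsf
end

section
/- There exists an absolute constant C > 0 with the following property. Let Q ≥ 2 and Q ≤ R ≤ 4Q² be reals. Let E be the set of pairs of integers (q, q′) with Q ≤ q, q′ < 2Q and R ≤ lcm(q, q′) < 2R. For an integer q with Q ≤ q < 2Q and an integer r, set m_q(r) = #{q′ : (q, q′) ∈ E and lcm(q, q′) = r}. Then for every real m₀ ≥ 1: #{(q, q′) ∈ E : m_q(lcm(q, q′)) ≥ m₀} ≤ C m₀^{−1} R log Q. -/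
/-!
The triples `(q, q', q'')` with `(q, q'), (q, q'') ∈ E` and `lcm(q, q') = lcm(q, q'')` number
`∑_{(q,q') ∈ E} m_q(lcm(q, q'))`, which is at least `m₀` times the number of atypical pairs;
so it suffices to show that there are `≪ R log Q` such triples.

Writing `h = lcm(q, q') / q`, both `q'` and `q''` are `h` times a divisor of `q`; with
`d = gcd(gcd(q, q'), gcd(q, q''))` this gives `q = d a b k`, `q' = d a h`, `q'' = d b h`.
Here `a/2 < b < 2a`, and `d a > Q² / (2R)` because `h < 2R/Q`. For fixed `(d, a, b)` there are
at most `3Q/(da)` values of `h` and `3Q/(dab)` of `k`, and `∑_{a/2 < b < 2a} 1/b ≤ 4`, so the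
number of triples is `≪ Q² ∑_{da > Q²/(2R)} (da)⁻² ≪ Q² · (R/Q²) · ∑_{d ≤ 2Q+1} 1/d ≪ R log Q`.
-/

/-- Membership of the pair `(q, q′)` in the set `E`: `Q ≤ q, q′ < 2Q` and
`R ≤ lcm(q, q′) < 2R`. -/
def memE (Q R : ℝ) (q q' : ℕ) : Prop :=
  Q ≤ (q : ℝ) ∧ (q : ℝ) < 2 * Q ∧ Q ≤ (q' : ℝ) ∧ (q' : ℝ) < 2 * Q ∧
    R ≤ (Nat.lcm q q' : ℝ) ∧ (Nat.lcm q q' : ℝ) < 2 * R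

/-- `m_q(r) = #{q′ : (q, q′) ∈ E, lcm(q, q′) = r}`. -/
noncomputable def lcmMult (Q R : ℝ) (q r : ℕ) : ℕ :=
  Set.ncard {q' : ℕ | memE Q R q q' ∧ Nat.lcm q q' = r}

open Finset
open scoped Classical

lemma sum_inv_le_four_of_lt_two_mul {s : Finset ℕ} {a : ℕ}
    (hs : ∀ b ∈ s, a < 2 * b ∧ b < 2 * a) : ∑ b ∈ s, (b : ℝ)⁻¹ ≤ 4 := by
  rcases Nat.eq_zero_or_pos a with rfl | ha
  · rw [show s = ∅ from eq_empty_of_forall_notMem fun b hb => by have := hs b hb; omega]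
    simp
  have ha' : (0 : ℝ) < a := by exact_mod_cast ha
  have hcard : (#s : ℝ) ≤ 2 * a := by
    have : #s ≤ #(range (2 * a)) := card_le_card fun b hb => mem_range.mpr (hs b hb).2
    rw [card_range] at this
    exact_mod_cast this
  have hterm : ∀ b ∈ s, (b : ℝ)⁻¹ ≤ 2 / a := fun b hb => by
    have : (a : ℝ) < 2 * b := by exact_mod_cast (hs b hb).1
    rw [inv_le_comm₀ (by linarith) (by positivity), inv_div]
    linarith
  calc ∑ b ∈ s, (b : ℝ)⁻¹ ≤ #s • (2 / a : ℝ) := sum_le_card_nsmul _ _ _ hterm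
    _ ≤ 2 * a * (2 / a) := by rw [nsmul_eq_mul]; gcongr
    _ = 4 := by field_simp; ring

lemma sum_inv_sq_filter_lt_le (N : ℕ) {Y : ℝ} (hY : 0 < Y) :
    ∑ m ∈ (Icc 1 N).filter (fun m : ℕ => Y < m), ((m : ℝ) ^ 2)⁻¹ ≤ 2 / Y := by
  have hsub : (Icc 1 N).filter (fun m : ℕ => Y < m) ⊆ Ioo ⌊Y⌋₊ (N + 1) := fun m hm => by
    rw [mem_filter, mem_Icc] at hm
    rw [mem_Ioo]
    exact ⟨(Nat.floor_lt hY.le).mpr hm.2, by omega⟩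
  calc _ ≤ ∑ m ∈ Ioo ⌊Y⌋₊ (N + 1), ((m : ℝ) ^ 2)⁻¹ :=
        sum_le_sum_of_subset_of_nonneg hsub fun _ _ _ => by positivity
    _ ≤ 2 / (⌊Y⌋₊ + 1) := sum_Ioo_inv_sq_le _ _
    _ ≤ 2 / Y := by gcongr; exact (Nat.lt_floor_add_one Y).le

lemma sum_Icc_inv_le_one_add_log (N : ℕ) : ∑ d ∈ Icc 1 N, (d : ℝ)⁻¹ ≤ 1 + Real.log N := by
  simpa [harmonic_eq_sum_Icc] using harmonic_le_one_add_log N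

lemma sum_inv_mul_sq_le (N : ℕ) {X : ℝ} (hX : 0 < X) :
    ∑ d ∈ Icc 1 N, ∑ a ∈ (Icc 1 N).filter (fun a : ℕ => X < d * a), (((d * a : ℕ) : ℝ) ^ 2)⁻¹
      ≤ 2 / X * (1 + Real.log N) := by
  have hinner : ∀ d ∈ Icc 1 N,
      ∑ a ∈ (Icc 1 N).filter (fun a : ℕ => X < d * a), (((d * a : ℕ) : ℝ) ^ 2)⁻¹
        ≤ 2 / X * (d : ℝ)⁻¹ := fun d hd => by
    have hd : (0 : ℝ) < d := by exact_mod_cast (mem_Icc.mp hd).1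
    have hfilter : (Icc 1 N).filter (fun a : ℕ => X < d * a)
        = (Icc 1 N).filter (fun a : ℕ => X / d < a) := by
      ext a; simp only [mem_filter, div_lt_iff₀' hd]
    calc _ = ((d : ℝ) ^ 2)⁻¹ *
            ∑ a ∈ (Icc 1 N).filter (fun a : ℕ => X / d < a), ((a : ℝ) ^ 2)⁻¹ := by
          rw [hfilter, mul_sum]; push_cast; simp only [mul_pow, mul_inv]
      _ ≤ ((d : ℝ) ^ 2)⁻¹ * (2 / (X / d)) := by
          gcongr; exact sum_inv_sq_filter_lt_le N (by positivity)
      _ = 2 / X * (d : ℝ)⁻¹ := by field_simp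
  calc _ ≤ ∑ d ∈ Icc 1 N, 2 / X * (d : ℝ)⁻¹ := sum_le_sum hinner
    _ ≤ 2 / X * (1 + Real.log N) := by
        rw [← mul_sum]; gcongr; exact sum_Icc_inv_le_one_add_log N

lemma card_le_of_forall_mul_mem_Ico {s : Finset ℕ} {L : ℕ} {Q : ℝ} (hQ : 0 < Q) (hL : 0 < L)
    (hs : ∀ m ∈ s, Q ≤ L * m ∧ L * m < 2 * Q) : (#s : ℝ) ≤ 3 * Q / L := by
  obtain rfl | ⟨m, hm⟩ := s.eq_empty_or_nonempty
  · simp only [card_empty, Nat.cast_zero]; positivity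
  have hL' : (0 : ℝ) < L := by exact_mod_cast hL
  have hsub : s ⊆ Ico ⌈Q / L⌉₊ ⌈2 * Q / L⌉₊ := fun x hx => by
    obtain ⟨h₁, h₂⟩ := hs x hx
    rw [mem_Ico, Nat.ceil_le, Nat.lt_ceil, div_le_iff₀ hL', lt_div_iff₀ hL']
    constructor <;> linarith
  have hcard : #s + ⌈Q / L⌉₊ ≤ ⌈2 * Q / L⌉₊ := by
    have := card_le_card hsub
    have := card_pos.mpr ⟨m, hm⟩
    rw [Nat.card_Ico] at *
    omega
  have hL_le : (L : ℝ) ≤ 2 * Q := by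
    obtain ⟨h₁, h₂⟩ := hs m hm
    have : m ≠ 0 := by rintro rfl; simp at h₁; linarith
    have : (1 : ℝ) ≤ m := by exact_mod_cast Nat.one_le_iff_ne_zero.mpr this
    nlinarith
  have hceil : (⌈2 * Q / L⌉₊ : ℝ) < 2 * Q / L + 1 := Nat.ceil_lt_add_one (by positivity)
  have hfloor : Q / L ≤ ⌈Q / L⌉₊ := Nat.le_ceil _
  have hone : 1 ≤ 2 * Q / L := by rw [le_div_iff₀ hL']; linarith
  have : (#s : ℝ) + ⌈Q / L⌉₊ ≤ ⌈2 * Q / L⌉₊ := by exact_mod_cast hcard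
  have : 2 * Q / L = 2 * (Q / L) := by ring
  have : 3 * Q / L = 3 * (Q / L) := by ring
  linarith

lemma mul_card_filter_le_sum {ι : Type*} (s : Finset ι) (f : ι → ℝ) (hf : ∀ i ∈ s, 0 ≤ f i)
    (c : ℝ) : c * #(s.filter fun i => c ≤ f i) ≤ ∑ i ∈ s, f i :=
  calc c * #(s.filter fun i => c ≤ f i) = ∑ _i ∈ s.filter fun i => c ≤ f i, c := by
        rw [sum_const, nsmul_eq_mul, mul_comm]
    _ ≤ ∑ i ∈ s.filter fun i => c ≤ f i, f i := sum_le_sum fun i hi => (mem_filter.mp hi).2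
    _ ≤ ∑ i ∈ s, f i := sum_le_sum_of_subset_of_nonneg (filter_subset _ _) fun i hi _ => hf i hi

lemma eq_gcd_mul_of_lcm_eq_mul {q r h : ℕ} (hq : q ≠ 0) (hl : Nat.lcm q r = q * h) :
    r = Nat.gcd q r * h := by
  have := Nat.gcd_mul_lcm q r
  rw [hl, mul_left_comm] at this
  exact (Nat.eq_of_mul_eq_mul_left (Nat.pos_of_ne_zero hq) this).symm

lemma exists_eq_mul_of_lcm_eq {q q' q'' : ℕ} (hq : q ≠ 0)
    (hlcm : Nat.lcm q q' = Nat.lcm q q'') :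
    ∃ d a b h k : ℕ, q = d * a * b * k ∧ q' = d * a * h ∧ q'' = d * b * h ∧
      Nat.lcm q q' = q * h := by
  set h := Nat.lcm q q' / q
  have hl : Nat.lcm q q' = q * h := (Nat.mul_div_cancel' (Nat.dvd_lcm_left q q')).symm
  set d := Nat.gcd (Nat.gcd q q') (Nat.gcd q q'')
  have hd : 0 < d :=
    Nat.gcd_pos_of_pos_left _ (Nat.gcd_pos_of_pos_left _ (Nat.pos_of_ne_zero hq))
  set a := Nat.gcd q q' / d
  set b := Nat.gcd q q'' / d
  have ha : Nat.gcd q q' = d * a := (Nat.mul_div_cancel' (Nat.gcd_dvd_left _ _)).symm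
  have hb : Nat.gcd q q'' = d * b := (Nat.mul_div_cancel' (Nat.gcd_dvd_right _ _)).symm
  have hlcm_ab : Nat.lcm (Nat.gcd q q') (Nat.gcd q q'') = d * a * b := by
    rw [ha, hb, Nat.lcm_mul_left, (Nat.coprime_div_gcd_div_gcd hd).lcm_eq_mul, mul_assoc]
  obtain ⟨k, hk⟩ : d * a * b ∣ q :=
    hlcm_ab ▸ Nat.lcm_dvd (Nat.gcd_dvd_left q q') (Nat.gcd_dvd_left q q'')
  refine ⟨d, a, b, h, k, hk, ?_, ?_, hl⟩
  · rw [← ha]; exact eq_gcd_mul_of_lcm_eq_mul hq hl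
  · rw [← hb]; exact eq_gcd_mul_of_lcm_eq_mul hq (hlcm ▸ hl)

noncomputable def pairsE (Q R : ℝ) : Finset (ℕ × ℕ) :=
  (range ⌈2 * Q⌉₊ ×ˢ range ⌈2 * Q⌉₊).filter fun p => memE Q R p.1 p.2

noncomputable def lcmFiber (Q R : ℝ) (q r : ℕ) : Finset ℕ :=
  (range ⌈2 * Q⌉₊).filter fun q' => memE Q R q q' ∧ Nat.lcm q q' = r

noncomputable def lcmTriples (Q R : ℝ) : Finset ((_ : ℕ × ℕ) × ℕ) :=
  (pairsE Q R).sigma fun p => lcmFiber Q R p.1 (Nat.lcm p.1 p.2)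

noncomputable def mulWindow (Q : ℝ) (L : ℕ) : Finset ℕ :=
  (range ⌈2 * Q⌉₊).filter fun m => Q ≤ L * m ∧ L * m < 2 * Q

noncomputable def lcmShapes (N : ℕ) (X : ℝ) : Finset (ℕ × ℕ × ℕ) :=
  (Icc 1 N ×ˢ Icc 1 N ×ˢ Icc 1 N).filter fun t =>
    X < t.1 * t.2.1 ∧ t.2.1 < 2 * t.2.2 ∧ t.2.2 < 2 * t.2.1

lemma card_mulWindow_le {Q : ℝ} {L : ℕ} (hQ : 0 < Q) (hL : 0 < L) :
    (#(mulWindow Q L) : ℝ) ≤ 3 * Q / L :=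
  card_le_of_forall_mul_mem_Ico hQ hL fun _ hm => (mem_filter.mp hm).2

lemma ncard_setOf_memE_and (Q R : ℝ) (P : ℕ × ℕ → Prop) :
    Set.ncard {p : ℕ × ℕ | memE Q R p.1 p.2 ∧ P p} = #((pairsE Q R).filter P) := by
  rw [← Set.ncard_coe_finset]
  congr 1
  ext p
  simp only [pairsE, coe_filter, mem_filter, mem_product, mem_range, Set.mem_ofPred_eq]
  exact ⟨fun h => ⟨⟨⟨Nat.lt_ceil.mpr h.1.2.1, Nat.lt_ceil.mpr h.1.2.2.2.1⟩, h.1⟩, h.2⟩,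
    fun h => ⟨h.1.2, h.2⟩⟩

lemma lcmMult_eq_card_lcmFiber (Q R : ℝ) (q r : ℕ) : lcmMult Q R q r = #(lcmFiber Q R q r) := by
  rw [lcmMult, ← Set.ncard_coe_finset]
  congr 1
  ext q'
  simp only [lcmFiber, coe_filter, mem_range, Set.mem_ofPred_eq]
  exact ⟨fun h => ⟨Nat.lt_ceil.mpr h.1.2.2.2.1, h⟩, fun h => h.2⟩

lemma sum_lcmMult_eq_card_lcmTriples (Q R : ℝ) :
    ∑ p ∈ pairsE Q R, (lcmMult Q R p.1 (Nat.lcm p.1 p.2) : ℝ) = #(lcmTriples Q R) := by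
  simp only [lcmTriples, card_sigma, lcmMult_eq_card_lcmFiber, Nat.cast_sum]

lemma mem_lcmShapes_of_memE {Q R : ℝ} {d a b h k : ℕ} (hQ : 0 < Q)
    (hE' : memE Q R (d * a * b * k) (d * a * h)) (hE'' : memE Q R (d * a * b * k) (d * b * h))
    (hl : Nat.lcm (d * a * b * k) (d * a * h) = d * a * b * k * h) :
    (d, a, b) ∈ lcmShapes ⌈2 * Q⌉₊ (Q ^ 2 / (2 * R)) ∧
      h ∈ mulWindow Q (d * a) ∧ k ∈ mulWindow Q (d * a * b) := by
  obtain ⟨hQq, hq2Q, hQq', hq'2Q, hRl, hl2R⟩ := hE'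
  obtain ⟨-, -, hQq'', hq''2Q, -, -⟩ := hE''
  have hq : 0 < d * a * b * k := by
    rw [Nat.pos_iff_ne_zero]; rintro h0; rw [h0] at hQq; simp at hQq; linarith
  have hq' : 0 < d * a * h := by
    rw [Nat.pos_iff_ne_zero]; rintro h0; rw [h0] at hQq'; simp at hQq'; linarith
  have hle : d ≤ d * a * b * k ∧ a ≤ d * a * b * k ∧ b ≤ d * a * b * k ∧ k ≤ d * a * b * k ∧
      h ≤ d * a * h :=
    ⟨Nat.le_of_dvd hq (Dvd.intro (a * b * k) (by ring)),
      Nat.le_of_dvd hq (Dvd.intro (d * b * k) (by ring)),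
      Nat.le_of_dvd hq (Dvd.intro (d * a * k) (by ring)),
      Nat.le_of_dvd hq (Dvd.intro (d * a * b) (by ring)),
      Nat.le_of_dvd hq' (Dvd.intro (d * a) (by ring))⟩
  have hqn := Nat.lt_ceil.mpr hq2Q
  have hq'n := Nat.lt_ceil.mpr hq'2Q
  simp only [CanonicallyOrderedAdd.mul_pos] at hq hq'
  rw [hl] at hRl hl2R
  push_cast at hQq hq2Q hRl hl2R hQq' hq'2Q hQq'' hq''2Q
  have hd : (0 : ℝ) < d := by exact_mod_cast hq.1.1.1
  have ha : (0 : ℝ) < a := by exact_mod_cast hq.1.1.2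
  have hh : (0 : ℝ) < h := by exact_mod_cast hq'.2
  simp only [lcmShapes, mulWindow, mem_filter, mem_product, mem_Icc, mem_range]
  refine ⟨⟨⟨⟨by omega, by omega⟩, ⟨by omega, by omega⟩, ⟨by omega, by omega⟩⟩, ?_, ?_, ?_⟩,
    ⟨by omega, ?_⟩, ⟨by omega, ?_⟩⟩
  · have hQh : Q * h < 2 * R := by nlinarith
    have hQ2 : Q ^ 2 ≤ d * a * (Q * h) := by nlinarith
    rw [div_lt_iff₀ (by linarith)]
    nlinarith [mul_lt_mul_of_pos_left hQh (mul_pos hd ha)]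
  · exact_mod_cast (show (a : ℝ) < 2 * b by nlinarith)
  · exact_mod_cast (show (b : ℝ) < 2 * a by nlinarith)
  · push_cast; constructor <;> linarith
  · push_cast; constructor <;> linarith

lemma lcmTriples_subset_biUnion {Q R : ℝ} (hQ : 0 < Q) :
    lcmTriples Q R ⊆ (lcmShapes ⌈2 * Q⌉₊ (Q ^ 2 / (2 * R))).biUnion fun t =>
      (mulWindow Q (t.1 * t.2.1) ×ˢ mulWindow Q (t.1 * t.2.1 * t.2.2)).image fun hk =>
        (⟨(t.1 * t.2.1 * t.2.2 * hk.2, t.1 * t.2.1 * hk.1), t.1 * t.2.2 * hk.1⟩ :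
          (_ : ℕ × ℕ) × ℕ) := by
  rintro ⟨⟨q, q'⟩, q''⟩ hx
  simp only [lcmTriples, pairsE, lcmFiber, mem_sigma, mem_filter] at hx
  obtain ⟨⟨-, hE'⟩, -, hE'', hlcm⟩ := hx
  have hq : q ≠ 0 := by rintro rfl; have := hE'.1; simp at this; linarith
  obtain ⟨d, a, b, h, k, rfl, rfl, rfl, hl⟩ := exists_eq_mul_of_lcm_eq hq hlcm.symm
  obtain ⟨ht, hh, hk⟩ := mem_lcmShapes_of_memE hQ hE' hE'' hl
  exact mem_biUnion.mpr ⟨(d, a, b), ht, mem_image.mpr ⟨(h, k), mem_product.mpr ⟨hh, hk⟩, rfl⟩⟩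

lemma sum_lcmShapes_le (N : ℕ) {X : ℝ} (hX : 0 < X) :
    ∑ t ∈ lcmShapes N X, ((((t.1 * t.2.1 : ℕ) : ℝ) ^ 2) * t.2.2)⁻¹
      ≤ 8 / X * (1 + Real.log N) := by
  rw [lcmShapes, sum_filter, sum_product]
  calc _ ≤ ∑ d ∈ Icc 1 N, ∑ a ∈ (Icc 1 N).filter (fun a : ℕ => X < d * a),
        4 * (((d * a : ℕ) : ℝ) ^ 2)⁻¹ := by
        refine sum_le_sum fun d _ => ?_
        rw [sum_product, sum_filter]
        refine sum_le_sum fun a _ => ?_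
        split_ifs with hXda
        · simp only [hXda, true_and]
          rw [← sum_filter]
          simp only [mul_inv]
          rw [← mul_sum, mul_comm]
          gcongr
          exact sum_inv_le_four_of_lt_two_mul fun b hb => (mem_filter.mp hb).2
        · simp [hXda]
    _ ≤ 4 * (2 / X * (1 + Real.log N)) := by
        simp only [← mul_sum]
        gcongr
        exact sum_inv_mul_sq_le N hX
    _ = 8 / X * (1 + Real.log N) := by ring

lemma card_lcmTriples_le {Q R : ℝ} (hQ : 0 < Q) (hR : 0 < R) :
    (#(lcmTriples Q R) : ℝ) ≤ 144 * R * (1 + Real.log ⌈2 * Q⌉₊) := by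
  set shapes := lcmShapes ⌈2 * Q⌉₊ (Q ^ 2 / (2 * R))
  calc (#(lcmTriples Q R) : ℝ)
      ≤ ∑ t ∈ shapes,
          (#(mulWindow Q (t.1 * t.2.1)) * #(mulWindow Q (t.1 * t.2.1 * t.2.2)) : ℝ) := by
        have := (card_le_card (lcmTriples_subset_biUnion (R := R) hQ)).trans card_biUnion_le
        refine (Nat.cast_le.mpr this).trans ?_
        push_cast
        gcongr with t
        exact_mod_cast card_image_le.trans (card_product _ _).le
    _ ≤ ∑ t ∈ shapes, 9 * Q ^ 2 * ((((t.1 * t.2.1 : ℕ) : ℝ) ^ 2) * t.2.2)⁻¹ := by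
        refine sum_le_sum fun t ht => ?_
        simp only [shapes, lcmShapes, mem_filter, mem_product, mem_Icc] at ht
        obtain ⟨⟨⟨hd, -⟩, ⟨ha, -⟩, ⟨hb, -⟩⟩, -⟩ := ht
        calc _ ≤ 3 * Q / ((t.1 * t.2.1 : ℕ) : ℝ) * (3 * Q / ((t.1 * t.2.1 * t.2.2 : ℕ) : ℝ)) :=
              mul_le_mul (card_mulWindow_le hQ (by positivity))
                (card_mulWindow_le hQ (by positivity)) (by positivity) (by positivity)
          _ = _ := by push_cast; field_simp; ring
    _ = 9 * Q ^ 2 * ∑ t ∈ shapes, ((((t.1 * t.2.1 : ℕ) : ℝ) ^ 2) * t.2.2)⁻¹ := (mul_sum ..).symm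
    _ ≤ 9 * Q ^ 2 * (8 / (Q ^ 2 / (2 * R)) * (1 + Real.log ⌈2 * Q⌉₊)) := by
        gcongr; exact sum_lcmShapes_le _ (by positivity)
    _ = 144 * R * (1 + Real.log ⌈2 * Q⌉₊) := by field_simp; ring

lemma one_add_log_ceil_two_mul_le {Q : ℝ} (hQ : 2 ≤ Q) :
    1 + Real.log ⌈2 * Q⌉₊ ≤ 5 * Real.log Q := by
  have hn : (⌈2 * Q⌉₊ : ℝ) ≤ Q ^ 3 := by
    have := Nat.ceil_lt_add_one (show 0 ≤ 2 * Q by linarith)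
    have : 4 * Q ≤ Q ^ 3 := by nlinarith [mul_le_mul hQ hQ (by norm_num) (by linarith)]
    linarith
  have hn0 : (0 : ℝ) < ⌈2 * Q⌉₊ := by
    exact_mod_cast Nat.ceil_pos.mpr (show (0 : ℝ) < 2 * Q by linarith)
  have hlog_n : Real.log ⌈2 * Q⌉₊ ≤ 3 * Real.log Q := by
    have := Real.log_le_log hn0 hn
    rwa [Real.log_pow, Nat.cast_ofNat] at this
  have hlog_two : Real.log 2 ≤ Real.log Q := Real.log_le_log (by norm_num) hQ
  linarith [Real.log_two_gt_d9]

/-- There is an absolute constant `C > 0` such that for all reals `2 ≤ Q ≤ R ≤ 4Q²`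
and every `m₀ ≥ 1`, the number of pairs `(q, q′) ∈ E` with `m_q(lcm(q,q′)) ≥ m₀`
is at most `C m₀^{-1} R log Q`. -/
theorem atypical_lcm_pairs_bound :
    ∃ C : ℝ, 0 < C ∧
      ∀ Q R m₀ : ℝ, 2 ≤ Q → Q ≤ R → R ≤ 4 * Q ^ 2 → 1 ≤ m₀ →
        (Set.ncard {p : ℕ × ℕ | memE Q R p.1 p.2 ∧
            m₀ ≤ (lcmMult Q R p.1 (Nat.lcm p.1 p.2) : ℝ)} : ℝ) ≤
          C * m₀⁻¹ * R * Real.log Q := by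
  refine ⟨720, by norm_num, fun Q R m₀ hQ hQR _ hm₀ => ?_⟩
  have hR : 0 < R := by linarith
  have hcount :
      m₀ * #((pairsE Q R).filter fun p => m₀ ≤ (lcmMult Q R p.1 (Nat.lcm p.1 p.2) : ℝ))
        ≤ 144 * R * (1 + Real.log ⌈2 * Q⌉₊) :=
    calc _ ≤ ∑ p ∈ pairsE Q R, (lcmMult Q R p.1 (Nat.lcm p.1 p.2) : ℝ) :=
          mul_card_filter_le_sum _ _ (fun _ _ => Nat.cast_nonneg _) _
      _ = #(lcmTriples Q R) := sum_lcmMult_eq_card_lcmTriples Q R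
      _ ≤ _ := card_lcmTriples_le (by linarith) hR
  have hlog := mul_le_mul_of_nonneg_left (one_add_log_ceil_two_mul_le hQ) hR.le
  rw [ncard_setOf_memE_and, show 720 * m₀⁻¹ * R * Real.log Q = 720 * R * Real.log Q / m₀ by ring,
    le_div_iff₀' (by linarith)]
  linarith
end

section
/- Let Q ≥ 2 and Q ≤ R ≤ 4Q² be reals, and let q, r be fixed integers with Q ≤ q < 2Q and R ≤ r < 2R. Then: (i) for every integer q′ with Q ≤ q′ < 2Q and lcm(q, q′) = r, the number gcd(q, q′) is a divisor of q satisfying Q²/(2R) ≤ gcd(q, q′) ≤ 4Q²/R; (ii) the map q′ ↦ gcd(q, q′) is injective on the set {q′ : Q ≤ q′ < 2Q, lcm(q, q′) = r}; consequently, (iii) #{q′ : Q ≤ q′ < 2Q, lcm(q, q′) = r} ≤ σ_D(q) with D = Q²/(2R), where σ_D(q) = #{d : d | q, D ≤ d ≤ 8D}. -/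
/-- `σ_D(q)` is the number of divisors `d` of `q` with `D ≤ d ≤ 8D`. -/
noncomputable def sigmaD (D : ℝ) (q : ℕ) : ℕ :=
  (q.divisors.filter (fun d : ℕ => D ≤ (d : ℝ) ∧ (d : ℝ) ≤ 8 * D)).card

/-- Let `2 ≤ Q ≤ R ≤ 4Q²`, `Q ≤ q < 2Q` and `R ≤ r < 2R`. Then:
(i) for every `Q ≤ q′ < 2Q` with `lcm(q, q′) = r`, `gcd(q, q′)` is a divisor of `q`
with `Q²/(2R) ≤ gcd(q, q′) ≤ 4Q²/R`;
(ii) `q′ ↦ gcd(q, q′)` is injective on `{q′ : Q ≤ q′ < 2Q, lcm(q, q′) = r}`;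
(iii) consequently `#{q′ : Q ≤ q′ < 2Q, lcm(q, q′) = r} ≤ σ_D(q)` with `D = Q²/(2R)`. -/
theorem gcd_divisor_injection (Q R : ℝ) (hQ : 2 ≤ Q) (hQR : Q ≤ R) (hR : R ≤ 4 * Q ^ 2)
    (q r : ℕ) (hq1 : Q ≤ (q : ℝ)) (hq2 : (q : ℝ) < 2 * Q)
    (hr1 : R ≤ (r : ℝ)) (hr2 : (r : ℝ) < 2 * R) :
    (∀ q' : ℕ, Q ≤ (q' : ℝ) → (q' : ℝ) < 2 * Q → Nat.lcm q q' = r →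
        Nat.gcd q q' ∣ q ∧ Q ^ 2 / (2 * R) ≤ (Nat.gcd q q' : ℝ) ∧
          (Nat.gcd q q' : ℝ) ≤ 4 * Q ^ 2 / R) ∧
    (∀ q₁' q₂' : ℕ, Q ≤ (q₁' : ℝ) → (q₁' : ℝ) < 2 * Q → Nat.lcm q q₁' = r →
        Q ≤ (q₂' : ℝ) → (q₂' : ℝ) < 2 * Q → Nat.lcm q q₂' = r →
        Nat.gcd q q₁' = Nat.gcd q q₂' → q₁' = q₂') ∧
    Set.ncard {q' : ℕ | Q ≤ (q' : ℝ) ∧ (q' : ℝ) < 2 * Q ∧ Nat.lcm q q' = r} ≤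
      sigmaD (Q ^ 2 / (2 * R)) q := by
  have hQ0 : (0:ℝ) < Q := by linarith
  have hR0 : (0:ℝ) < R := by linarith
  have hq0 : 0 < q := by
    have : (0:ℝ) < (q:ℝ) := lt_of_lt_of_le hQ0 hq1
    exact_mod_cast this
  -- key real identity
  have key : ∀ q' : ℕ, Nat.lcm q q' = r →
      (Nat.gcd q q' : ℝ) * (r : ℝ) = (q : ℝ) * (q' : ℝ) := by
    intro q' hl
    have := Nat.gcd_mul_lcm q q'
    rw [hl] at this
    exact_mod_cast congrArg (Nat.cast : ℕ → ℝ) this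
  have part1 : ∀ q' : ℕ, Q ≤ (q' : ℝ) → (q' : ℝ) < 2 * Q → Nat.lcm q q' = r →
      Nat.gcd q q' ∣ q ∧ Q ^ 2 / (2 * R) ≤ (Nat.gcd q q' : ℝ) ∧
        (Nat.gcd q q' : ℝ) ≤ 4 * Q ^ 2 / R := by
    intro q' hq1' hq2' hl
    have hk := key q' hl
    have hg0 : (0:ℝ) ≤ (Nat.gcd q q' : ℝ) := Nat.cast_nonneg _
    refine ⟨Nat.gcd_dvd_left q q', ?_, ?_⟩
    · rw [div_le_iff₀ (by linarith)]
      nlinarith [hk]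
    · rw [le_div_iff₀ hR0]
      nlinarith [hk]
  have part2 : ∀ q₁' q₂' : ℕ, Q ≤ (q₁' : ℝ) → (q₁' : ℝ) < 2 * Q → Nat.lcm q q₁' = r →
      Q ≤ (q₂' : ℝ) → (q₂' : ℝ) < 2 * Q → Nat.lcm q q₂' = r →
      Nat.gcd q q₁' = Nat.gcd q q₂' → q₁' = q₂' := by
    intro q₁' q₂' _ _ hl1 _ _ hl2 hg
    have h1 := Nat.gcd_mul_lcm q q₁'
    have h2 := Nat.gcd_mul_lcm q q₂'
    rw [hl1] at h1
    rw [hl2] at h2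
    rw [hg] at h1
    have : q * q₁' = q * q₂' := by rw [← h1, ← h2]
    exact Nat.eq_of_mul_eq_mul_left hq0 this
  refine ⟨part1, part2, ?_⟩
  set S : Set ℕ := {q' : ℕ | Q ≤ (q' : ℝ) ∧ (q' : ℝ) < 2 * Q ∧ Nat.lcm q q' = r} with hS
  set T := q.divisors.filter (fun d : ℕ => Q ^ 2 / (2 * R) ≤ (d : ℝ) ∧
      (d : ℝ) ≤ 8 * (Q ^ 2 / (2 * R))) with hT
  have h8D : 8 * (Q ^ 2 / (2 * R)) = 4 * Q ^ 2 / R := by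
    field_simp; ring
  have hinj : Set.InjOn (fun q' => Nat.gcd q q') S := by
    intro a ha b hb hab
    exact part2 a b ha.1 ha.2.1 ha.2.2 hb.1 hb.2.1 hb.2.2 hab
  have hsub : (fun q' => Nat.gcd q q') '' S ⊆ (T : Set ℕ) := by
    rintro x ⟨q', hq', rfl⟩
    obtain ⟨hdvd, hlo, hhi⟩ := part1 q' hq'.1 hq'.2.1 hq'.2.2
    simp only [hT, Finset.coe_filter, Set.mem_setOf_eq, Nat.mem_divisors]
    exact ⟨⟨hdvd, hq0.ne'⟩, hlo, by rw [h8D]; exact hhi⟩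
  calc S.ncard = ((fun q' => Nat.gcd q q') '' S).ncard :=
        (Set.ncard_image_of_injOn hinj).symm
    _ ≤ (T : Set ℕ).ncard := Set.ncard_le_ncard hsub (T.finite_toSet)
    _ = T.card := Set.ncard_coe_finset T
    _ = sigmaD (Q ^ 2 / (2 * R)) q := rfl
end

section
/- There exists an absolute constant C > 0 with the following property. For every real Q ≥ 2, every real D ≥ 1 and every real m₀ ≥ 1: #{q ∈ ℤ : Q ≤ q < 2Q, σ_D(q) ≥ m₀} ≤ C m₀^{−2} Q log Q, where σ_D(q) = #{d : d | q, D ≤ d ≤ 8D}. -/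
open Finset

section

variable {α β : Type*}

theorem sum_sq_card_filter (s : Finset α) (T : Finset β) (P : β → α → Prop)
    [∀ d q, Decidable (P d q)] :
    ∑ q ∈ s, #{d ∈ T | P d q} ^ 2 = ∑ d₁ ∈ T, ∑ d₂ ∈ T, #{q ∈ s | P d₁ q ∧ P d₂ q} := by
  simp only [card_filter, sq, sum_mul_sum, ite_zero_mul_ite_zero, mul_one]
  rw [sum_comm]
  exact sum_congr rfl fun _ _ => sum_comm

theorem sq_mul_card_filter_le_sum_sq (s : Finset α) (f : α → ℝ) {m : ℝ} (hm : 0 ≤ m) :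
    m ^ 2 * #{x ∈ s | m ≤ f x} ≤ ∑ x ∈ s, f x ^ 2 := by
  calc m ^ 2 * #{x ∈ s | m ≤ f x} = #{x ∈ s | m ≤ f x} • m ^ 2 := by
        rw [nsmul_eq_mul, mul_comm]
    _ ≤ ∑ x ∈ s with m ≤ f x, f x ^ 2 :=
        card_nsmul_le_sum _ _ _ fun x hx => pow_le_pow_left₀ hm (mem_filter.1 hx).2 2
    _ ≤ ∑ x ∈ s, f x ^ 2 :=
        sum_le_sum_of_subset_of_nonneg (filter_subset _ _) fun _ _ _ => sq_nonneg _

end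

theorem Ioc_filter_dvd_and_dvd_card_eq_div_lcm (N a b : ℕ) :
    #{q ∈ Ioc 0 N | a ∣ q ∧ b ∣ q} = N / a.lcm b := by
  simp_rw [← Nat.lcm_dvd_iff]
  exact Nat.Ioc_filter_dvd_card_eq_div N _

theorem natCast_div_lcm_le (N a b : ℕ) :
    ((N / a.lcm b : ℕ) : ℝ) ≤ N * a.gcd b / (a * b) := by
  refine Nat.cast_div_le.trans_eq ?_
  rcases Nat.eq_zero_or_pos (a.gcd b) with h | h
  · obtain ⟨rfl, rfl⟩ := Nat.gcd_eq_zero_iff.1 h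
    simp
  · rw [← Nat.cast_mul a b, ← Nat.gcd_mul_lcm a b, Nat.cast_mul, mul_comm (N : ℝ),
      mul_div_mul_left _ _ (by positivity)]

theorem sum_sq_card_filter_dvd_le (N : ℕ) (T : Finset ℕ) :
    ∑ q ∈ Ioc 0 N, (#{d ∈ T | d ∣ q} : ℝ) ^ 2 ≤
      N * ∑ a ∈ T, ∑ b ∈ T, (a.gcd b : ℝ) / (a * b) := by
  have h := sum_sq_card_filter (Ioc 0 N) T (· ∣ ·)
  simp only [Ioc_filter_dvd_and_dvd_card_eq_div_lcm] at h
  calc ∑ q ∈ Ioc 0 N, (#{d ∈ T | d ∣ q} : ℝ) ^ 2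
      = ∑ a ∈ T, ∑ b ∈ T, ((N / a.lcm b : ℕ) : ℝ) := by exact_mod_cast h
    _ ≤ ∑ a ∈ T, ∑ b ∈ T, N * (a.gcd b : ℝ) / (a * b) :=
        sum_le_sum fun a _ => sum_le_sum fun b _ => natCast_div_lcm_le N a b
    _ = _ := by simp_rw [mul_sum, mul_div_assoc]

theorem sum_gcd_Ioc_le (M : ℕ) :
    ∑ a ∈ Ioc 0 M, ∑ b ∈ Ioc 0 M, (a.gcd b : ℝ) ≤ M ^ 2 * harmonic M := by
  set s := Ioc 0 M
  have hmaps : ∀ p ∈ s ×ˢ s, p.1.gcd p.2 ∈ s := by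
    intro p hp
    obtain ⟨⟨ha, haM⟩, -⟩ := mem_product.1 hp |>.imp mem_Ioc.1 mem_Ioc.1
    exact mem_Ioc.2 ⟨Nat.gcd_pos_of_pos_left _ ha, (Nat.gcd_le_left _ ha).trans haM⟩
  have hfiber : ∀ g ∈ s, ∑ p ∈ s ×ˢ s with p.1.gcd p.2 = g, (p.1.gcd p.2 : ℝ) ≤ M ^ 2 / g := by
    intro g hg
    have hg0 : (0 : ℝ) < g := by exact_mod_cast (mem_Ioc.1 hg).1
    calc ∑ p ∈ s ×ˢ s with p.1.gcd p.2 = g, (p.1.gcd p.2 : ℝ)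
        = ∑ p ∈ s ×ˢ s with p.1.gcd p.2 = g, (g : ℝ) :=
          sum_congr rfl fun p hp => by rw [(mem_filter.1 hp).2]
      _ ≤ ∑ p ∈ {a ∈ s | g ∣ a} ×ˢ {b ∈ s | g ∣ b}, (g : ℝ) := by
          refine sum_le_sum_of_subset_of_nonneg ?_ fun _ _ _ => hg0.le
          intro p hp
          obtain ⟨hps, rfl⟩ := mem_filter.1 hp
          obtain ⟨h1, h2⟩ := mem_product.1 hps
          exact mem_product.2 ⟨mem_filter.2 ⟨h1, Nat.gcd_dvd_left _ _⟩,
            mem_filter.2 ⟨h2, Nat.gcd_dvd_right _ _⟩⟩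
      _ = g * ((M / g : ℕ) : ℝ) ^ 2 := by
          rw [sum_const, card_product, Nat.Ioc_filter_dvd_card_eq_div, nsmul_eq_mul]
          push_cast
          ring
      _ ≤ g * (M / g) ^ 2 := by gcongr; exact Nat.cast_div_le
      _ = M ^ 2 / g := by field_simp
  calc ∑ a ∈ s, ∑ b ∈ s, (a.gcd b : ℝ)
      = ∑ g ∈ s, ∑ p ∈ s ×ˢ s with p.1.gcd p.2 = g, (p.1.gcd p.2 : ℝ) := by
        rw [sum_fiberwise_of_maps_to hmaps, sum_product]
    _ ≤ ∑ g ∈ s, (M : ℝ) ^ 2 / g := sum_le_sum hfiber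
    _ = M ^ 2 * harmonic M := by
        rw [harmonic_eq_sum_Icc, show s = Icc 1 M from (Icc_add_one_left_eq_Ioc 0 M).symm]
        push_cast
        simp_rw [mul_sum, div_eq_mul_inv]

theorem sum_gcd_div_mul_le {T : Finset ℕ} {M : ℕ} {D : ℝ} (hD : 0 < D) (hTM : T ⊆ Ioc 0 M)
    (hTD : ∀ d ∈ T, D ≤ d) :
    ∑ a ∈ T, ∑ b ∈ T, (a.gcd b : ℝ) / (a * b) ≤ (M / D) ^ 2 * harmonic M := by
  calc ∑ a ∈ T, ∑ b ∈ T, (a.gcd b : ℝ) / (a * b)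
      ≤ ∑ a ∈ T, ∑ b ∈ T, (a.gcd b : ℝ) / D ^ 2 := by
        refine sum_le_sum fun a ha => sum_le_sum fun b hb => ?_
        rw [sq]
        gcongr
        exacts [hTD a ha, hTD b hb]
    _ ≤ ∑ a ∈ Ioc 0 M, ∑ b ∈ Ioc 0 M, (a.gcd b : ℝ) / D ^ 2 := by
        refine (sum_le_sum fun a _ => sum_le_sum_of_subset_of_nonneg hTM fun _ _ _ => ?_).trans
          (sum_le_sum_of_subset_of_nonneg hTM fun _ _ _ => sum_nonneg fun _ _ => ?_) <;>
        positivity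
    _ = (∑ a ∈ Ioc 0 M, ∑ b ∈ Ioc 0 M, (a.gcd b : ℝ)) / D ^ 2 := by simp_rw [sum_div]
    _ ≤ M ^ 2 * harmonic M / D ^ 2 := by gcongr; exact sum_gcd_Ioc_le M
    _ = (M / D) ^ 2 * harmonic M := by ring

theorem harmonic_le_four_mul_log {Q : ℝ} (hQ : 2 ≤ Q) {n : ℕ} (hn : (n : ℝ) ≤ 2 * Q) :
    (harmonic n : ℝ) ≤ 4 * Real.log Q := by
  have hlogQ : Real.log 2 ≤ Real.log Q := Real.log_le_log two_pos hQ
  have hlog2 := Real.log_two_gt_d9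
  rcases n.eq_zero_or_pos with rfl | hn0
  · simp only [harmonic_zero, Rat.cast_zero]
    linarith
  calc (harmonic n : ℝ) ≤ 1 + Real.log n := harmonic_le_one_add_log n
    _ ≤ 1 + Real.log (2 * Q) := by gcongr
    _ = 1 + Real.log 2 + Real.log Q := by rw [Real.log_mul two_ne_zero (by linarith)]; ring
    _ ≤ 4 * Real.log Q := by linarith

-- Truncating at `N` keeps the window inside `[1, N]`, so that its harmonic sum is `O(log N)`
-- even when `D` is much larger than `N`.
noncomputable def divisorWindow (D : ℝ) (N : ℕ) : Finset ℕ :=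
  {d ∈ Ioc 0 (min N ⌊8 * D⌋₊) | D ≤ d}

theorem sigmaD_eq_card_filter_dvd {D : ℝ} (hD : 0 ≤ D) {N q : ℕ} (hq : q ∈ Ioc 0 N) :
    sigmaD D q = #{d ∈ divisorWindow D N | d ∣ q} := by
  obtain ⟨hq0, hqN⟩ := mem_Ioc.1 hq
  unfold sigmaD divisorWindow
  congr 1
  ext d
  simp only [mem_filter, Nat.mem_divisors, mem_Ioc, le_min_iff,
    Nat.le_floor_iff (by positivity : 0 ≤ 8 * D)]
  constructor
  · rintro ⟨⟨hdq, -⟩, hDd, hd8⟩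
    exact ⟨⟨⟨Nat.pos_of_dvd_of_pos hdq hq0, (Nat.le_of_dvd hq0 hdq).trans hqN, hd8⟩, hDd⟩, hdq⟩
  · rintro ⟨⟨⟨-, -, hd8⟩, hDd⟩, hdq⟩
    exact ⟨⟨hdq, hq0.ne'⟩, hDd, hd8⟩

theorem sum_sigmaD_sq_le {Q D : ℝ} (hQ : 2 ≤ Q) (hD : 0 < D) :
    ∑ q ∈ Ioc 0 ⌊2 * Q⌋₊, (sigmaD D q : ℝ) ^ 2 ≤ 512 * Q * Real.log Q := by
  set N := ⌊2 * Q⌋₊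
  set M := min N ⌊8 * D⌋₊
  set T := divisorWindow D N
  have hN : (N : ℝ) ≤ 2 * Q := Nat.floor_le (by linarith)
  have hMN : (M : ℝ) ≤ 2 * Q := (Nat.cast_le.2 (min_le_left _ _)).trans hN
  have hMD : (M : ℝ) / D ≤ 8 := by
    rw [div_le_iff₀ hD]
    exact (Nat.cast_le.2 (min_le_right _ _)).trans (Nat.floor_le (by linarith))
  calc ∑ q ∈ Ioc 0 N, (sigmaD D q : ℝ) ^ 2
      = ∑ q ∈ Ioc 0 N, (#{d ∈ T | d ∣ q} : ℝ) ^ 2 :=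
        sum_congr rfl fun q hq => by rw [sigmaD_eq_card_filter_dvd hD.le hq]
    _ ≤ N * ∑ a ∈ T, ∑ b ∈ T, (a.gcd b : ℝ) / (a * b) := sum_sq_card_filter_dvd_le N T
    _ ≤ (2 * Q) * ((M / D) ^ 2 * harmonic M) := by
        gcongr
        exact sum_gcd_div_mul_le hD (filter_subset _ _) fun d hd => (mem_filter.1 hd).2
    _ ≤ (2 * Q) * (8 ^ 2 * (4 * Real.log Q)) := by
        gcongr
        · exact Rat.cast_nonneg.2 (sum_nonneg fun _ _ => by positivity)
        · exact harmonic_le_four_mul_log hQ hMN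
    _ = 512 * Q * Real.log Q := by ring

/-- There is an absolute constant `C > 0` such that for all reals `Q ≥ 2`, `D ≥ 1`
and `m₀ ≥ 1`, the number of integers `Q ≤ q < 2Q` with `σ_D(q) ≥ m₀` is at most
`C m₀^{-2} Q log Q`. -/
theorem second_moment_divisor_count :
    ∃ C : ℝ, 0 < C ∧
      ∀ Q D m₀ : ℝ, 2 ≤ Q → 1 ≤ D → 1 ≤ m₀ →
        (Set.ncard {q : ℕ | Q ≤ (q : ℝ) ∧ (q : ℝ) < 2 * Q ∧
            m₀ ≤ (sigmaD D q : ℝ)} : ℝ) ≤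
          C * m₀⁻¹ ^ 2 * Q * Real.log Q := by
  refine ⟨512, by norm_num, fun Q D m₀ hQ hD hm₀ => ?_⟩
  set S := {q ∈ Ioc 0 ⌊2 * Q⌋₊ | m₀ ≤ (sigmaD D q : ℝ)}
  have hsub : {q : ℕ | Q ≤ (q : ℝ) ∧ (q : ℝ) < 2 * Q ∧ m₀ ≤ (sigmaD D q : ℝ)} ⊆ S := by
    rintro q ⟨hQq, hq2Q, hσ⟩
    exact mem_filter.2 ⟨mem_Ioc.2 ⟨by exact_mod_cast (by linarith : (0 : ℝ) < q),
      Nat.le_floor hq2Q.le⟩, hσ⟩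
  have hS : m₀ ^ 2 * #S ≤ 512 * Q * Real.log Q :=
    (sq_mul_card_filter_le_sum_sq _ _ (by linarith)).trans (sum_sigmaD_sq_le hQ (by linarith))
  calc (Set.ncard _ : ℝ) ≤ #S := by
        exact_mod_cast (Set.ncard_le_ncard hsub).trans_eq (Set.ncard_coe_finset S)
    _ = m₀⁻¹ ^ 2 * (m₀ ^ 2 * #S) := by field_simp
    _ ≤ m₀⁻¹ ^ 2 * (512 * Q * Real.log Q) := by gcongr
    _ = 512 * m₀⁻¹ ^ 2 * Q * Real.log Q := by ring
end

section
/- There exists an absolute constant C > 0 such that for every real D ≥ 1: Σ_{D ≤ d₁, d₂ ≤ 8D} 1/lcm(d₁, d₂) ≤ C log(2D), where the sum is over pairs of positive integers d₁, d₂ with D ≤ d₁ ≤ 8D and D ≤ d₂ ≤ 8D. -/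
/-!
Since `1 / lcm(a, b) = gcd(a, b) / (a b) ≤ ∑_{g ∣ a, g ∣ b} g / (a b)`, the double sum is at most
`∑_g g (∑_{g ∣ d} 1/d)²`. For `d ∈ [D, 8D]` we have `1/d ≤ 1/D`, and at most `8D/g` such `d` are
multiples of `g`, so the inner sum is at most `8/g`. The total is therefore at most
`64 ∑_{g ≤ 8D} 1/g = O(log 2D)`.
-/

open Finset

theorem one_div_lcm_le_sum_common_dvd {a b N : ℕ} (ha : 0 < a) (hb : 0 < b) (haN : a ≤ N) :
    (1 : ℝ) / (a.lcm b : ℝ) ≤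
      ∑ g ∈ Icc 1 N, (g : ℝ) * ((if g ∣ a then 1 / (a : ℝ) else 0) *
        (if g ∣ b then 1 / (b : ℝ) else 0)) := by
  have hgcd : a.gcd b ∈ Icc 1 N :=
    mem_Icc.mpr ⟨Nat.gcd_pos_of_pos_left b ha, (Nat.gcd_le_left b ha).trans haN⟩
  have hlcm : (1 : ℝ) / (a.lcm b : ℝ) = (a.gcd b : ℝ) * (1 / a * (1 / b)) := by
    have hprod : (a.gcd b : ℝ) * a.lcm b = a * b := by exact_mod_cast Nat.gcd_mul_lcm a b
    have : (a.lcm b : ℝ) ≠ 0 := by exact_mod_cast (Nat.lcm_pos ha hb).ne'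
    field_simp
    linarith
  calc (1 : ℝ) / (a.lcm b : ℝ) = (a.gcd b : ℝ) * ((if a.gcd b ∣ a then 1 / (a : ℝ) else 0) *
        (if a.gcd b ∣ b then 1 / (b : ℝ) else 0)) := by
        rw [if_pos (Nat.gcd_dvd_left a b), if_pos (Nat.gcd_dvd_right a b), hlcm]
    _ ≤ _ := single_le_sum (f := fun g : ℕ => (g : ℝ) * ((if g ∣ a then 1 / (a : ℝ) else 0) *
        (if g ∣ b then 1 / (b : ℝ) else 0))) (fun g _ => by positivity) hgcd

theorem sum_sum_one_div_lcm_le {S : Finset ℕ} {N : ℕ} (hS : S ⊆ Icc 1 N) :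
    ∑ a ∈ S, ∑ b ∈ S, (1 : ℝ) / (a.lcm b : ℝ) ≤
      ∑ g ∈ Icc 1 N, (g : ℝ) * (∑ d ∈ S with g ∣ d, (1 : ℝ) / d) ^ 2 := by
  calc ∑ a ∈ S, ∑ b ∈ S, (1 : ℝ) / (a.lcm b : ℝ)
      ≤ ∑ a ∈ S, ∑ b ∈ S, ∑ g ∈ Icc 1 N, (g : ℝ) * ((if g ∣ a then 1 / (a : ℝ) else 0) *
        (if g ∣ b then 1 / (b : ℝ) else 0)) :=
        sum_le_sum fun a ha => sum_le_sum fun b hb =>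
          one_div_lcm_le_sum_common_dvd (mem_Icc.mp (hS ha)).1 (mem_Icc.mp (hS hb)).1
            (mem_Icc.mp (hS ha)).2
    _ = ∑ g ∈ Icc 1 N, (g : ℝ) * (∑ d ∈ S with g ∣ d, (1 : ℝ) / d) ^ 2 := by
        rw [sum_congr rfl fun a _ => sum_comm, sum_comm]
        refine sum_congr rfl fun g _ => ?_
        rw [sq, sum_filter, sum_mul_sum, mul_sum]
        exact sum_congr rfl fun a _ => (mul_sum _ _ _).symm

theorem sum_dvd_one_div_le {S : Finset ℕ} {N : ℕ} {D c : ℝ} (hD : 0 < D) (hS : S ⊆ Icc 1 N)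
    (hDS : ∀ d ∈ S, D ≤ d) (hN : (N : ℝ) ≤ c * D) {g : ℕ} (hg : 0 < g) :
    ∑ d ∈ S with g ∣ d, (1 : ℝ) / d ≤ c / g := by
  have hcard : #{d ∈ S | g ∣ d} ≤ N / g := by
    rw [← Nat.Ioc_filter_dvd_card_eq_div]
    refine card_le_card fun d hd => ?_
    rw [mem_filter] at hd ⊢
    exact ⟨mem_Ioc.mpr (mem_Icc.mp (hS hd.1)), hd.2⟩
  have hdiv : ((N / g : ℕ) : ℝ) ≤ N / g := Nat.cast_div_le
  calc ∑ d ∈ S with g ∣ d, (1 : ℝ) / d ≤ #{d ∈ S | g ∣ d} • (1 / D) :=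
        sum_le_card_nsmul _ _ _ fun d hd =>
          one_div_le_one_div_of_le hD (hDS d (mem_filter.mp hd).1)
    _ ≤ (N / g : ℝ) * (1 / D) := by
        rw [nsmul_eq_mul]
        gcongr
        exact (Nat.cast_le.mpr hcard).trans hdiv
    _ ≤ (c * D / g) * (1 / D) := by gcongr
    _ = c / g := by field_simp

theorem sum_sum_one_div_lcm_le_sq_mul_harmonic {S : Finset ℕ} {N : ℕ} {D c : ℝ} (hD : 0 < D)
    (hS : S ⊆ Icc 1 N) (hDS : ∀ d ∈ S, D ≤ d) (hN : (N : ℝ) ≤ c * D) :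
    ∑ a ∈ S, ∑ b ∈ S, (1 : ℝ) / (a.lcm b : ℝ) ≤ c ^ 2 * harmonic N := by
  calc ∑ a ∈ S, ∑ b ∈ S, (1 : ℝ) / (a.lcm b : ℝ)
      ≤ ∑ g ∈ Icc 1 N, (g : ℝ) * (∑ d ∈ S with g ∣ d, (1 : ℝ) / d) ^ 2 :=
        sum_sum_one_div_lcm_le hS
    _ ≤ ∑ g ∈ Icc 1 N, (g : ℝ) * (c / g) ^ 2 := by
        refine sum_le_sum fun g hg => ?_
        gcongr
        exact sum_dvd_one_div_le hD hS hDS hN (mem_Icc.mp hg).1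
    _ = c ^ 2 * harmonic N := by
        rw [harmonic_eq_sum_Icc, Rat.cast_sum, mul_sum]
        refine sum_congr rfl fun g hg => ?_
        have : (g : ℝ) ≠ 0 := by have := (mem_Icc.mp hg).1; positivity
        push_cast
        field_simp

theorem one_add_log_eight_mul_le {D : ℝ} (hD : 1 ≤ D) :
    1 + Real.log (8 * D) ≤ 5 * Real.log (2 * D) := by
  have hsplit : Real.log (8 * D) = 2 * Real.log 2 + Real.log (2 * D) := by
    rw [show 8 * D = 2 ^ 2 * (2 * D) by ring, Real.log_mul (by norm_num) (by positivity),
      Real.log_pow, Nat.cast_ofNat]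
  have hlog2 : Real.log 2 ≤ Real.log (2 * D) := Real.log_le_log (by norm_num) (by linarith)
  linarith [Real.log_two_gt_d9]

/-- There is an absolute constant `C > 0` such that for every real `D ≥ 1`:
`∑_{D ≤ d₁, d₂ ≤ 8D} 1/lcm(d₁, d₂) ≤ C log(2D)`, the sum being over pairs of
positive integers `d₁, d₂` in `[D, 8D]`. -/
theorem sum_inv_lcm_bound :
    ∃ C : ℝ, 0 < C ∧
      ∀ D : ℝ, 1 ≤ D →
        ∑ d₁ ∈ (Finset.Icc 1 ⌊8 * D⌋₊).filter
            (fun d : ℕ => D ≤ (d : ℝ) ∧ (d : ℝ) ≤ 8 * D),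
          ∑ d₂ ∈ (Finset.Icc 1 ⌊8 * D⌋₊).filter
              (fun d : ℕ => D ≤ (d : ℝ) ∧ (d : ℝ) ≤ 8 * D),
            (1 : ℝ) / (Nat.lcm d₁ d₂ : ℝ) ≤ C * Real.log (2 * D) := by
  refine ⟨64 * 5, by norm_num, fun D hD => ?_⟩
  set N := ⌊8 * D⌋₊
  have hN : (N : ℝ) ≤ 8 * D := Nat.floor_le (by linarith)
  have hN1 : 1 ≤ N := Nat.le_floor (by push_cast; linarith)
  calc _ ≤ (8 : ℝ) ^ 2 * harmonic N :=
        sum_sum_one_div_lcm_le_sq_mul_harmonic (by linarith) (filter_subset _ _)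
          (fun d hd => (mem_filter.mp hd).2.1) hN
    _ ≤ 64 * (1 + Real.log (8 * D)) := by
        have hlogN : Real.log N ≤ Real.log (8 * D) :=
          Real.log_le_log (by exact_mod_cast hN1) hN
        linarith [harmonic_le_one_add_log N]
    _ ≤ 64 * 5 * Real.log (2 * D) := by linarith [one_add_log_eight_mul_le hD]
end
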